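/- Let S be a monoid. Let RIFP be the class of S-acts that are retracts of coproducts of finitely presented S-acts, let U_FP be the class of unitary S-monomorphisms f : X → Y such that Y∖im(f) ∈ RIFP, and let PE be the class of pure S-epimorphisms. Then (U_FP, PE) is a weak factorization system. -/

import Mathlib

universe u

/-- A right `S`-act: a set with a right action of the monoid `S`. -/
structure SAct (S : Type u) [Monoid S] : Type (u + 1) where
  carrier : Type u
  act : carrier → S → carrier
  act_one : ∀ a, act a 1 = a
  act_mul : ∀ a s t, act (act a s) t = act a (s * t)

/-- A map of right `S`-acts. -/
structure SMap {S : Type u} [Monoid S] (A B : SAct S) : Type u where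
  toFun : A.carrier → B.carrier
  map_act : ∀ a s, toFun (A.act a s) = B.act (toFun a) s

namespace SMap

variable {S : Type u} [Monoid S]

/-- Composition of `S`-maps. -/
def comp {A B C : SAct S} (g : SMap B C) (f : SMap A B) : SMap A C :=
  ⟨fun a => g.toFun (f.toFun a), fun a s => by
    show g.toFun (f.toFun (A.act a s)) = C.act (g.toFun (f.toFun a)) s
    rw [f.map_act, g.map_act]⟩

/-- The identity `S`-map. -/
def id (A : SAct S) : SMap A A := ⟨fun a => a, fun _ _ => rfl⟩

end SMap

variable {S : Type u} [Monoid S]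

/-- `f` has the left lifting property with respect to `g` (equivalently, `g` has the
right lifting property with respect to `f`). -/
def Lifts {A B C D : SAct S} (f : SMap A B) (g : SMap C D) : Prop :=
  ∀ (u : SMap A C) (v : SMap B D), g.comp u = v.comp f →
    ∃ h : SMap B C, h.comp f = u ∧ g.comp h = v

/-- A class of `S`-maps. -/
def MapClass (S : Type u) [Monoid S] : Type (u + 1) :=
  ∀ {A B : SAct S}, SMap A B → Prop

/-- `C^□`: the class of maps with the right lifting property with respect to every map of `C`. -/
def rlpC (C : MapClass S) : MapClass S :=
  fun {_ _} g => ∀ {A B : SAct S} (f : SMap A B), C f → Lifts f g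

/-- `□C`: the class of maps with the left lifting property with respect to every map of `C`. -/
def llpC (C : MapClass S) : MapClass S :=
  fun {_ _} f => ∀ {C' D : SAct S} (g : SMap C' D), C g → Lifts f g

/-- `cof(C) = □(C^□)`. -/
def cofC (C : MapClass S) : MapClass S := llpC (rlpC C)

/-- `fib(C) = (□C)^□`. -/
def fibC (C : MapClass S) : MapClass S := rlpC (llpC C)

/-- `(L, R)` is a weak factorization system. -/
structure IsWFS (L R : MapClass S) : Prop where
  rlp_eq : ∀ {A B : SAct S} (g : SMap A B), R g ↔ rlpC L g
  llp_eq : ∀ {A B : SAct S} (f : SMap A B), L f ↔ llpC R f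
  factor : ∀ {A B : SAct S} (h : SMap A B),
    ∃ (C : SAct S) (f : SMap A C) (g : SMap C B), L f ∧ R g ∧ g.comp f = h

/-- `g : A → C` is a retract of `f : A → B`:  there are `α : C → B`, `β : B → C` with
`β ∘ α = 1`, `α ∘ g = f` and `β ∘ f = g`. -/
def RetractOfMap {A B C : SAct S} (g : SMap A C) (f : SMap A B) : Prop :=
  ∃ (α : SMap C B) (β : SMap B C),
    β.comp α = SMap.id C ∧ α.comp g = f ∧ β.comp f = g

/-- The square with sides `f : A → B`, `u : A → X`, `fbar : X → P`, `v : B → P` is a pushout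
square (i.e. `fbar` is the pushout of `f` along `u`). -/
structure IsPushoutSq {A B X P : SAct S}
    (f : SMap A B) (u : SMap A X) (fbar : SMap X P) (v : SMap B P) : Prop where
  comm : fbar.comp u = v.comp f
  ue : ∀ ⦃Q : SAct S⦄ (g' : SMap X Q) (v' : SMap B Q), g'.comp u = v'.comp f →
    ∃! k : SMap P Q, k.comp fbar = g' ∧ k.comp v = v'

/-- The square with sides `pr1 : P → D`, `pr2 : P → A`, `g : A → B`, `v : D → B` is a
pullback square (i.e. `pr1` is the pullback of `g` along `v`). -/
structure IsPullbackSq {P A D B : SAct S}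
    (pr1 : SMap P D) (pr2 : SMap P A) (g : SMap A B) (v : SMap D B) : Prop where
  comm : g.comp pr2 = v.comp pr1
  ue : ∀ ⦃Q : SAct S⦄ (q1 : SMap Q D) (q2 : SMap Q A), g.comp q2 = v.comp q1 →
    ∃! k : SMap Q P, pr1.comp k = q1 ∧ pr2.comp k = q2

/-- `f` is an isomorphism of `S`-acts. -/
def IsIsoMap {A B : SAct S} (f : SMap A B) : Prop :=
  ∃ g : SMap B A, g.comp f = SMap.id A ∧ f.comp g = SMap.id B

/-- A directed system of `S`-acts indexed by the ordinals `< lam`. -/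
structure OSeq (S : Type u) [Monoid S] (lam : Ordinal.{u}) where
  obj : ∀ a : Ordinal.{u}, a < lam → SAct S
  map : ∀ (a b : Ordinal.{u}) (hab : a ≤ b) (hb : b < lam),
    SMap (obj a (lt_of_le_of_lt hab hb)) (obj b hb)
  map_id : ∀ (a : Ordinal.{u}) (ha : a < lam), map a a le_rfl ha = SMap.id (obj a ha)
  map_comp : ∀ (a b c : Ordinal.{u}) (hab : a ≤ b) (hbc : b ≤ c) (hc : c < lam),
    (map b c hbc hc).comp (map a b hab (lt_of_le_of_lt hbc hc)) = map a c (le_trans hab hbc) hc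

/-- A cocone over a directed system of `S`-acts indexed by ordinals `< lam`. -/
structure OCocone {lam : Ordinal.{u}} (F : OSeq S lam) where
  pt : SAct S
  ι : ∀ (a : Ordinal.{u}) (ha : a < lam), SMap (F.obj a ha) pt
  fac : ∀ (a b : Ordinal.{u}) (hab : a ≤ b) (hb : b < lam),
    (ι b hb).comp (F.map a b hab hb) = ι a (lt_of_le_of_lt hab hb)

/-- A cocone is a (directed) colimit if it satisfies the universal property. -/
def IsColimitO {lam : Ordinal.{u}} {F : OSeq S lam} (c : OCocone F) : Prop :=
  ∀ d : OCocone F, ∃! k : SMap c.pt d.pt, ∀ (a : Ordinal.{u}) (ha : a < lam),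
    k.comp (c.ι a ha) = d.ι a ha

/-- Restriction of a directed system to the ordinals `< γ`. -/
def OSeq.restrict {lam : Ordinal.{u}} (F : OSeq S lam) (γ : Ordinal.{u}) (hγ : γ ≤ lam) :
    OSeq S γ where
  obj a ha := F.obj a (lt_of_lt_of_le ha hγ)
  map a b hab hb := F.map a b hab (lt_of_lt_of_le hb hγ)
  map_id a ha := F.map_id a _
  map_comp a b c hab hbc hc := F.map_comp a b c hab hbc _

/-- The cocone over the restriction to `γ` with vertex `F.obj γ`. -/
def OSeq.coconeAt {lam : Ordinal.{u}} (F : OSeq S lam) (γ : Ordinal.{u}) (hγ : γ < lam) :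
    OCocone (F.restrict γ hγ.le) where
  pt := F.obj γ hγ
  ι a ha := F.map a γ ha.le hγ
  fac a b hab hb := F.map_comp a b γ hab hb.le hγ

/-- A `λ`-sequence: a directed system of `S`-acts indexed by the ordinals `< λ`, together
with a directed colimit, which is continuous at every limit ordinal `γ ≤ λ`. -/
structure LambdaSequence (S : Type u) [Monoid S] (lam : Ordinal.{u}) where
  seq : OSeq S lam
  cocone : OCocone seq
  isColimit : IsColimitO cocone
  continuity : ∀ (γ : Ordinal.{u}) (hγ : γ < lam), Order.IsSuccLimit γ →
    IsColimitO (seq.coconeAt γ hγ)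

/-- An ordinal `lam` is `γ`-filtered: it is a limit ordinal and every subset of `lam` of
cardinality at most `γ` has supremum `< lam`. -/
def IsGammaFiltered (γ : Cardinal.{u}) (lam : Ordinal.{u}) : Prop :=
  Order.IsSuccLimit lam ∧ ∀ A : Set Ordinal.{u}, A ⊆ Set.Iio lam →
    Cardinal.mk A ≤ Cardinal.lift.{u + 1} γ → sSup A < lam

/-- A split monomorphism. -/
def SplitMonoM {A B : SAct S} (f : SMap A B) : Prop :=
  ∃ γ : SMap B A, γ.comp f = SMap.id A

/-- A split epimorphism. -/
def SplitEpiM {A B : SAct S} (f : SMap A B) : Prop :=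
  ∃ γ : SMap B A, f.comp γ = SMap.id B

/-- A unitary monomorphism of `S`-acts. -/
def IsUnitaryMono {X Y : SAct S} (f : SMap X Y) : Prop :=
  Function.Injective f.toFun ∧
    ∀ (y : Y.carrier) (s : S), Y.act y s ∈ Set.range f.toFun → y ∈ Set.range f.toFun

/-- The class of unitary monomorphisms. -/
def UnitaryClass (S : Type u) [Monoid S] : MapClass S := fun {_ _} f => IsUnitaryMono f

/-- The class of split epimorphisms. -/
def SplitEpiClass (S : Type u) [Monoid S] : MapClass S := fun {_ _} f => SplitEpiM f

/-- `P` is projective with respect to the map `f : A → B`. -/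
def ProjWrt (P : SAct S) {A B : SAct S} (f : SMap A B) : Prop :=
  ∀ g : SMap P B, ∃ h : SMap P A, f.comp h = g

/-- `Q` is a retract of the act `P`. -/
def ActRetract (Q P : SAct S) : Prop :=
  ∃ (α : SMap Q P) (β : SMap P Q), β.comp α = SMap.id Q

/-- The coproduct (disjoint union) of two `S`-acts. -/
def SAct.coprod (A B : SAct S) : SAct S where
  carrier := A.carrier ⊕ B.carrier
  act x s := Sum.elim (fun a => Sum.inl (A.act a s)) (fun b => Sum.inr (B.act b s)) x
  act_one x := by cases x <;> simp [SAct.act_one]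
  act_mul x s t := by cases x <;> simp [SAct.act_mul]

/-- The coproduct (disjoint union) of a family of `S`-acts. -/
def SAct.sigmaCoprod {ι : Type u} (F : ι → SAct S) : SAct S where
  carrier := Σ i, (F i).carrier
  act x s := ⟨x.1, (F x.1).act x.2 s⟩
  act_one x := by cases x with | mk i a => exact congrArg (Sigma.mk i) ((F i).act_one a)
  act_mul x s t := by cases x with | mk i a => exact congrArg (Sigma.mk i) ((F i).act_mul a s t)

/-- The coproduct of a family of `S`-maps. -/
def coprodMap {ι : Type u} {A B : ι → SAct S} (f : ∀ i, SMap (A i) (B i)) :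
    SMap (SAct.sigmaCoprod A) (SAct.sigmaCoprod B) where
  toFun x := ⟨x.1, (f x.1).toFun x.2⟩
  map_act x s := congrArg (Sigma.mk x.1) ((f x.1).map_act x.2 s)

/-- An isomorphism class predicate: `A` and `B` are isomorphic `S`-acts. -/
def ActIso (A B : SAct S) : Prop := ∃ f : SMap A B, Function.Bijective f.toFun

/-- `B` is a direct summand of `A`. -/
def IsDirectSummand (B A : SAct S) : Prop := ∃ C : SAct S, ActIso (SAct.coprod B C) A

/-- The subact of `Y` on a subset `T` closed under the action. -/
def SAct.sub (Y : SAct S) (T : Set Y.carrier) (hT : ∀ t ∈ T, ∀ s : S, Y.act t s ∈ T) :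
    SAct S where
  carrier := {y // y ∈ T}
  act t s := ⟨Y.act t.1 s, hT t.1 t.2 s⟩
  act_one t := Subtype.ext (Y.act_one t.1)
  act_mul t s r := Subtype.ext (Y.act_mul t.1 s r)

/-- A class of `S`-acts. -/
def ActClass (S : Type u) [Monoid S] : Type (u + 1) := SAct S → Prop

/-- The class `R_X` of maps with respect to which every act of `X` is projective. -/
def RXClass (𝒳 : ActClass S) : MapClass S :=
  fun {_ _} f => ∀ P : SAct S, 𝒳 P → ProjWrt P f

/-- The class `U_X` of unitary monomorphisms `f : X → Y` with `Y ∖ im f ∈ X`. -/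
def UXClass (𝒳 : ActClass S) : MapClass S :=
  fun {_ Y} f =>
    ∃ (_ : Function.Injective f.toFun)
      (hu : ∀ (y : Y.carrier) (s : S),
        Y.act y s ∈ Set.range f.toFun → y ∈ Set.range f.toFun),
      𝒳 (Y.sub (Set.range f.toFun)ᶜ (fun t ht s hmem => ht (hu t s hmem)))

/-- Every `S`-act has an `𝒳`-precover. -/
def HasPrecover (𝒳 : ActClass S) (A : SAct S) : Prop :=
  ∃ (P : SAct S) (g : SMap P A), 𝒳 P ∧
    ∀ ⦃P' : SAct S⦄ (g' : SMap P' A), 𝒳 P' → ∃ f : SMap P' P, g.comp f = g'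

/-- A projective `S`-act. -/
def ProjectiveAct (P : SAct S) : Prop :=
  ∀ ⦃A B : SAct S⦄ (f : SMap A B), Function.Surjective f.toFun → ProjWrt P f

/-- The class of all surjective `S`-maps (epimorphisms). -/
def EpiClass (S : Type u) [Monoid S] : MapClass S :=
  fun {_ _} f => Function.Surjective f.toFun

/-- The free `S`-act on `n` generators. -/
def freeAct (S : Type u) [Monoid S] (n : ℕ) : SAct S where
  carrier := Fin n × S
  act p s := (p.1, p.2 * s)
  act_one p := by simp
  act_mul p s t := by simp [mul_assoc]

/-- `r` is a congruence on the `S`-act `A`. -/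
def IsCong (A : SAct S) (r : A.carrier → A.carrier → Prop) : Prop :=
  Equivalence r ∧ ∀ (a b : A.carrier) (s : S), r a b → r (A.act a s) (A.act b s)

/-- A finitely presented `S`-act: a quotient of a finitely generated free act by a
finitely generated congruence. -/
def FinPresented (M : SAct S) : Prop :=
  ∃ (n : ℕ) (q : SMap (freeAct S n) M), Function.Surjective q.toFun ∧
    ∃ (m : ℕ) (p : Fin m → (freeAct S n).carrier × (freeAct S n).carrier),
      (∀ i, q.toFun (p i).1 = q.toFun (p i).2) ∧
      ∀ r : (freeAct S n).carrier → (freeAct S n).carrier → Prop, IsCong (freeAct S n) r →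
        (∀ i, r (p i).1 (p i).2) →
        ∀ x y, q.toFun x = q.toFun y → r x y

/-- A pure epimorphism of `S`-acts. -/
def IsPureEpi {X Y : SAct S} (ψ : SMap X Y) : Prop :=
  Function.Surjective ψ.toFun ∧
    ∀ (M : SAct S), FinPresented M → ∀ f : SMap M Y, ∃ g : SMap M X, ψ.comp g = f

/-- The class of retracts of coproducts of finitely presented acts. -/
def RIFPClass (S : Type u) [Monoid S] : ActClass S :=
  fun A => ∃ (ι : Type u) (F : ι → SAct S),
    (∀ i, FinPresented (F i)) ∧ ActRetract A (SAct.sigmaCoprod F)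

/-- The one-element `S`-act. -/
def oneAct (S : Type u) [Monoid S] : SAct S :=
  ⟨PUnit, fun _ _ => PUnit.unit, fun _ => rfl, fun _ _ _ => rfl⟩

/-- The unique map to the one-element act. -/
def bangMap (A : SAct S) : SMap A (oneAct S) := ⟨fun _ => PUnit.unit, fun _ _ => rfl⟩

/-- The monoid `S` as a right `S`-act. -/
def regAct (S : Type u) [Monoid S] : SAct S := ⟨S, fun a s => a * s, mul_one, mul_assoc⟩

/-- The set of fixed points of an `S`-act. -/
def FixSet (A : SAct S) : Set A.carrier := {a | ∀ s : S, A.act a s = a}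

/-- The Rees quotient of `Y` collapsing the subset `T` (closed under the action) to a point. -/
def reesQuot (Y : SAct S) (T : Set Y.carrier) (hT : ∀ t ∈ T, ∀ s : S, Y.act t s ∈ T) :
    SAct S where
  carrier := Quot (fun a b => a = b ∨ (a ∈ T ∧ b ∈ T))
  act q s := Quot.lift (fun y => Quot.mk _ (Y.act y s))
    (fun a b hab => by
      rcases hab with h | ⟨ha, hb⟩
      · rw [h]
      · exact Quot.sound (Or.inr ⟨hT a ha s, hT b hb s⟩)) q
  act_one q := by
    induction q using Quot.ind with
    | _ y => exact congrArg (Quot.mk _) (Y.act_one y)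
  act_mul q s t := by
    induction q using Quot.ind with
    | _ y => exact congrArg (Quot.mk _) (Y.act_mul y s t)

/-- The class of monomorphisms whose Rees quotient lies in `𝒳`. -/
def XMonoClass (𝒳 : ActClass S) : MapClass S :=
  fun {X Y} f =>
    Function.Injective f.toFun ∧
      𝒳 (reesQuot Y (Set.range f.toFun)
        (fun t ht s => by
          obtain ⟨x, rfl⟩ := ht
          exact ⟨X.act x s, f.map_act x s⟩))

/-- The type of all `S`-maps (arrows). -/
def ArrowCls (S : Type u) [Monoid S] : Type (u + 1) := Σ (A B : SAct S), SMap A B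

/-- The class of pushouts of maps in `𝒞`. -/
def pushoutsOf (𝒞 : MapClass S) : MapClass S :=
  fun {X P} fbar => ∃ (A B : SAct S) (f : SMap A B) (u : SMap A X) (v : SMap B P),
    𝒞 f ∧ IsPushoutSq f u fbar v

/-- `h` is a transfinite composition of maps in `𝒟`. -/
def IsTransfiniteCompOf (𝒟 : MapClass S) {A L : SAct S} (h : SMap A L) : Prop :=
  ∃ (lam : Ordinal.{u}), Ordinal.omega0 ≤ lam ∧
    ∃ (Φ : LambdaSequence S lam) (h0 : (0 : Ordinal.{u}) < lam),
      (∀ (b : Ordinal.{u}) (hb : b + 1 < lam),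
        𝒟 (Φ.seq.map b (b + 1) (le_self_add : b ≤ b + 1) hb)) ∧
      Φ.seq.obj 0 h0 = A ∧ Φ.cocone.pt = L ∧ HEq (Φ.cocone.ι 0 h0) h

/-- `ret(𝒞)`: retracts of transfinite compositions of pushouts of maps in `𝒞`. -/
def retClass (𝒞 : MapClass S) : MapClass S :=
  fun {A _} g => ∃ (B : SAct S) (f : SMap A B),
    IsTransfiniteCompOf (pushoutsOf 𝒞) f ∧ RetractOfMap g f

/-- The class of pure epimorphisms. -/
def PureEpiClass (S : Type u) [Monoid S] : MapClass S := fun {_ _} f => IsPureEpi f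

/-- The subact `{z}` of `S`, for a left zero `z`. -/
def zSub (z : S) (hz : ∀ s : S, z * s = z) : SAct S :=
  (regAct S).sub {z} (fun t ht s => by
    have ht' : (t : S) = z := ht
    show @HMul.hMul S S S _ t s = z
    exact (congrArg (fun x : S => x * s) ht').trans (hz s))

/-- The inclusion `{z} → S`, for a left zero `z`. -/
def zIncl (z : S) (hz : ∀ s : S, z * s = z) : SMap (zSub z hz) (regAct S) :=
  ⟨fun t => t.1, fun _ _ => rfl⟩

/-- The subact `K_d = g⁻¹(d)` of `C`, for a fixed point `d` of `D`. -/
def kerAct {C D : SAct S} (g : SMap C D) (d : D.carrier) (hd : d ∈ FixSet D) : SAct S :=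
  C.sub {c | g.toFun c = d} (fun c hc s => by
    simp only [Set.mem_setOf_eq] at hc ⊢
    rw [g.map_act, hc]
    exact hd s)

/-- A centred `S`-act: an act with exactly one fixed point. -/
def CAct (S : Type u) [Monoid S] : Type (u + 1) :=
  {A : SAct S // ∃! a : A.carrier, ∀ s : S, A.act a s = a}

/-- A class of maps of centred `S`-acts. -/
abbrev MapClassC (S : Type u) [Monoid S] : Type (u + 1) :=
  ∀ (A B : CAct S), SMap A.1 B.1 → Prop

/-- `C^□` in the category of centred `S`-acts. -/
def rlpCC (𝒞 : MapClassC S) : MapClassC S :=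
  fun _ _ g => ∀ (X Y : CAct S) (f : SMap X.1 Y.1), 𝒞 X Y f → Lifts f g

/-- `□C` in the category of centred `S`-acts. -/
def llpCC (𝒞 : MapClassC S) : MapClassC S :=
  fun _ _ f => ∀ (X Y : CAct S) (g : SMap X.1 Y.1), 𝒞 X Y g → Lifts f g

/-- A weak factorization system in the category of centred `S`-acts. -/
structure IsWFSC (L R : MapClassC S) : Prop where
  rlp_eq : ∀ (A B : CAct S) (g : SMap A.1 B.1), R A B g ↔ rlpCC L A B g
  llp_eq : ∀ (A B : CAct S) (f : SMap A.1 B.1), L A B f ↔ llpCC R A B f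
  factor : ∀ (A B : CAct S) (h : SMap A.1 B.1),
    ∃ (C : CAct S) (f : SMap A.1 C.1) (g : SMap C.1 B.1), L A C f ∧ R C B g ∧ g.comp f = h

/-- The one-element centred `S`-act `0`. -/
def oneCAct (S : Type u) [Monoid S] : CAct S :=
  ⟨oneAct S, PUnit.unit, fun _ => rfl, fun _ _ => rfl⟩

/-- The unique map `0 → X` of centred `S`-acts. -/
noncomputable def zeroTo (X : CAct S) : SMap (oneCAct S).1 X.1 :=
  ⟨fun _ => X.2.choose, fun _ s => (X.2.choose_spec.1 s).symm⟩

/-!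
A unitary monomorphism `f : X → Y` splits `Y` as `im f ⊔ T`, so `f` lifts against `g` as soon
as maps out of `T` lift along `g`; when `T` is a retract of a coproduct of finitely presented
acts and `g` is pure, they lift summand by summand. Every map `f : X → Y` factors as the
coproduct injection `X → X ⊔ ∐ M` followed by the pure epimorphism `[f, ev] : X ⊔ ∐ M → Y`,
where `M` runs over all maps from finitely presented acts into `Y`. Conversely, a map with the
right lifting property is pure by lifting against `C → C ⊔ M`. A map `f` with the left lifting
property yields a section of `[f, ev]` under `X`: with `M` running over maps into `Y` this makes
`f` a unitary monomorphism, and with `M` running over maps into `T` it exhibits `T` as a retract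
of `∐ M`.
-/

namespace SMap

variable {A B C : SAct S}

@[ext]
theorem ext {f g : SMap A B} (h : ∀ a, f.toFun a = g.toFun a) : f = g := by
  cases f; cases g; congr; exact funext h

@[simp]
theorem comp_toFun (g : SMap B C) (f : SMap A B) (a : A.carrier) :
    (g.comp f).toFun a = g.toFun (f.toFun a) := rfl

@[simp]
theorem id_toFun (a : A.carrier) : (SMap.id A).toFun a = a := rfl

end SMap

namespace SAct

abbrev IsInvariant (M : SAct S) (T : Set M.carrier) : Prop :=
  ∀ t ∈ T, ∀ s : S, M.act t s ∈ T

theorem isInvariant_range {X Y : SAct S} (f : SMap X Y) : Y.IsInvariant (Set.range f.toFun) := by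
  rintro _ ⟨x, rfl⟩ s
  exact ⟨X.act x s, f.map_act x s⟩

theorem IsInvariant.preimage {M Y : SAct S} {T : Set Y.carrier} (hT : Y.IsInvariant T)
    (v : SMap M Y) : M.IsInvariant (v.toFun ⁻¹' T) := by
  intro m hm s
  simp only [Set.mem_preimage, v.map_act]
  exact hT _ hm s

def subι (M : SAct S) (T : Set M.carrier) (hT : M.IsInvariant T) : SMap (M.sub T hT) M :=
  ⟨Subtype.val, fun _ _ => rfl⟩

def inl (X E : SAct S) : SMap X (X.coprod E) := ⟨Sum.inl, fun _ _ => rfl⟩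

def inr (X E : SAct S) : SMap E (X.coprod E) := ⟨Sum.inr, fun _ _ => rfl⟩

def copair {X E Y : SAct S} (f : SMap X Y) (k : SMap E Y) : SMap (X.coprod E) Y where
  toFun := Sum.elim f.toFun k.toFun
  map_act := by
    rintro (x | e) s
    exacts [f.map_act x s, k.map_act e s]

def sigmaι {ι : Type u} (F : ι → SAct S) (i : ι) : SMap (F i) (SAct.sigmaCoprod F) where
  toFun a := ⟨i, a⟩
  map_act _ _ := rfl

def sigmaDesc {ι : Type u} {F : ι → SAct S} {Z : SAct S} (k : ∀ i, SMap (F i) Z) :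
    SMap (SAct.sigmaCoprod F) Z :=
  ⟨fun x => (k x.1).toFun x.2, fun x s => (k x.1).map_act x.2 s⟩

end SAct

open SAct

namespace SMap

variable {A B : SAct S}

def codRestrict (f : SMap A B) (T : Set B.carrier) (hT : B.IsInvariant T)
    (h : ∀ a, f.toFun a ∈ T) : SMap A (B.sub T hT) :=
  ⟨fun a => ⟨f.toFun a, h a⟩, fun a s => Subtype.ext (f.map_act a s)⟩

noncomputable def piecewise (T : Set A.carrier) (hT : A.IsInvariant T) (hTc : A.IsInvariant Tᶜ)
    (g₁ : SMap (A.sub T hT) B) (g₂ : SMap (A.sub Tᶜ hTc) B) : SMap A B where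
  toFun a := by
    classical
    exact if h : a ∈ T then g₁.toFun ⟨a, h⟩ else g₂.toFun ⟨a, h⟩
  map_act a s := by
    by_cases h : a ∈ T
    · simp only [dif_pos h, dif_pos (hT a h s)]
      exact g₁.map_act ⟨a, h⟩ s
    · simp only [dif_neg h, dif_neg (hTc a h s)]
      exact g₂.map_act ⟨a, h⟩ s

variable {T : Set A.carrier} {hT : A.IsInvariant T} {hTc : A.IsInvariant Tᶜ}
  {g₁ : SMap (A.sub T hT) B} {g₂ : SMap (A.sub Tᶜ hTc) B}

theorem piecewise_of_mem {a : A.carrier} (h : a ∈ T) :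
    (piecewise T hT hTc g₁ g₂).toFun a = g₁.toFun ⟨a, h⟩ := dif_pos h

theorem piecewise_of_not_mem {a : A.carrier} (h : a ∉ T) :
    (piecewise T hT hTc g₁ g₂).toFun a = g₂.toFun ⟨a, h⟩ := dif_neg h

noncomputable def rangeInv (f : SMap A B) (hf : Function.Injective f.toFun) :
    SMap (B.sub (Set.range f.toFun) (isInvariant_range f)) A where
  toFun y := y.2.choose
  map_act y s := hf (by
    show f.toFun (isInvariant_range f y.1 y.2 s).choose = f.toFun (A.act y.2.choose s)
    rw [(isInvariant_range f y.1 y.2 s).choose_spec, f.map_act, y.2.choose_spec])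

theorem rangeInv_toFun_apply (f : SMap A B) (hf : Function.Injective f.toFun)
    (y : (B.sub (Set.range f.toFun) (isInvariant_range f)).carrier) :
    f.toFun ((rangeInv f hf).toFun y) = y.1 :=
  y.2.choose_spec

theorem rangeInv_apply_toFun (f : SMap A B) (hf : Function.Injective f.toFun) (a : A.carrier) :
    (rangeInv f hf).toFun ⟨f.toFun a, a, rfl⟩ = a :=
  hf (rangeInv_toFun_apply f hf _)

end SMap

open SMap

namespace IsUnitaryMono

variable {X Y : SAct S} {f : SMap X Y}

theorem injective (hf : IsUnitaryMono f) : Function.Injective f.toFun := hf.1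

theorem isInvariant_compl (hf : IsUnitaryMono f) : Y.IsInvariant (Set.range f.toFun)ᶜ :=
  fun t ht s hmem => ht (hf.2 t s hmem)

theorem lifts_of_projWrt (hf : IsUnitaryMono f) {C D : SAct S} {g : SMap C D}
    (hT : ProjWrt (Y.sub (Set.range f.toFun)ᶜ hf.isInvariant_compl) g) : Lifts f g := by
  intro u v huv
  obtain ⟨l, hl⟩ := hT (v.comp (subι _ _ _))
  refine ⟨piecewise _ (isInvariant_range f) hf.isInvariant_compl
    (u.comp (rangeInv f hf.injective)) l, ?_, ?_⟩
  · ext x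
    rw [comp_toFun, piecewise_of_mem (Set.mem_range_self x)]
    exact congrArg u.toFun (rangeInv_apply_toFun f hf.injective x)
  · ext y
    by_cases hy : y ∈ Set.range f.toFun
    · obtain ⟨x, rfl⟩ := hy
      rw [comp_toFun, piecewise_of_mem (Set.mem_range_self x)]
      exact (congrArg (g.toFun ∘ u.toFun) (rangeInv_apply_toFun f hf.injective x)).trans
        (congrArg (fun k => k.toFun x) huv)
    · rw [comp_toFun, piecewise_of_not_mem hy]
      exact congrArg (fun k => k.toFun ⟨y, hy⟩) hl

end IsUnitaryMono

theorem isUnitaryMono_inl (X E : SAct S) : IsUnitaryMono (inl X E) := by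
  refine ⟨fun _ _ => Sum.inl.inj, ?_⟩
  rintro (x | e) s ⟨x', hx'⟩
  · exact ⟨x, rfl⟩
  · exact absurd hx' Sum.inl_ne_inr

def complInlToRight (X E : SAct S) :
    SMap ((X.coprod E).sub (Set.range (inl X E).toFun)ᶜ
      (isUnitaryMono_inl X E).isInvariant_compl) E where
  toFun
    | ⟨Sum.inl x, hx⟩ => (hx ⟨x, rfl⟩).elim
    | ⟨Sum.inr e, _⟩ => e
  map_act := by
    rintro ⟨x | e, hz⟩ s
    · exact absurd ⟨x, rfl⟩ hz
    · rfl

theorem inr_complInlToRight (X E : SAct S)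
    (z : ((X.coprod E).sub (Set.range (inl X E).toFun)ᶜ
      (isUnitaryMono_inl X E).isInvariant_compl).carrier) :
    Sum.inr ((complInlToRight X E).toFun z) = z.1 := by
  obtain ⟨x | e, hz⟩ := z
  · exact absurd ⟨x, rfl⟩ hz
  · rfl

theorem ActRetract.refl (A : SAct S) : ActRetract A A :=
  ⟨SMap.id A, SMap.id A, rfl⟩

theorem ActRetract.trans {A B C : SAct S} (hAB : ActRetract A B) (hBC : ActRetract B C) :
    ActRetract A C := by
  obtain ⟨α, β, hβα⟩ := hAB
  obtain ⟨α', β', hβα'⟩ := hBC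
  refine ⟨α'.comp α, β.comp β', ?_⟩
  ext a
  simp only [comp_toFun]
  rw [← comp_toFun β', hβα', id_toFun, ← comp_toFun β, hβα]

theorem ActRetract.complInl (X E : SAct S) :
    ActRetract ((X.coprod E).sub (Set.range (inl X E).toFun)ᶜ
      (isUnitaryMono_inl X E).isInvariant_compl) E := by
  refine ⟨complInlToRight X E,
    (inr X E).codRestrict _ _ fun _ => by rintro ⟨_, hx⟩; exact Sum.inl_ne_inr hx, ?_⟩
  ext z
  exact Subtype.ext (inr_complInlToRight X E z)

theorem ProjWrt.of_retract {P Q C D : SAct S} {g : SMap C D} (hQP : ActRetract Q P)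
    (hP : ProjWrt P g) : ProjWrt Q g := by
  obtain ⟨α, β, hβα⟩ := hQP
  intro w
  obtain ⟨l, hl⟩ := hP (w.comp β)
  refine ⟨l.comp α, ?_⟩
  ext q
  exact (congrArg (fun k => k.toFun (α.toFun q)) hl).trans
    (congrArg w.toFun (congrArg (fun k => k.toFun q) hβα))

theorem projWrt_sigmaCoprod {ι : Type u} {F : ι → SAct S} {C D : SAct S} {g : SMap C D}
    (hF : ∀ i, ProjWrt (F i) g) : ProjWrt (SAct.sigmaCoprod F) g := by
  intro w
  choose l hl using fun i => hF i (w.comp (sigmaι F i))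
  refine ⟨sigmaDesc l, ?_⟩
  ext ⟨i, a⟩
  exact congrArg (fun k : SMap (F i) D => k.toFun a) (hl i)

theorem finPresented_freeAct (n : ℕ) : FinPresented (freeAct S n) :=
  ⟨n, SMap.id _, Function.surjective_id, 0, Fin.elim0, fun i => i.elim0,
    fun _ hr _ x _ (hxy : x = _) => hxy ▸ hr.1.refl x⟩

def freeActOneMap {Z : SAct S} (z : Z.carrier) : SMap (freeAct S 1) Z where
  toFun x := Z.act z x.2
  map_act x s := (Z.act_mul z x.2 s).symm

/-- Surjectivity comes from lifting maps out of the free act on one generator. -/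
theorem isPureEpi_of_projWrt {C D : SAct S} {g : SMap C D}
    (hg : ∀ M, FinPresented M → ProjWrt M g) : IsPureEpi g := by
  refine ⟨fun z => ?_, hg⟩
  obtain ⟨l, hl⟩ := hg _ (finPresented_freeAct 1) (freeActOneMap z)
  exact ⟨l.toFun (0, 1), (congrArg (fun k => k.toFun (0, 1)) hl).trans (D.act_one z)⟩

/-- `FinPresented`, with generators and relations indexed by arbitrary finite types. -/
theorem finPresented_of_finite {M : SAct S} {G R : Type*} [Finite G] [Finite R]
    (gen : G → M.carrier) (rel : R → (G × S) × (G × S))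
    (hgen : ∀ z, ∃ a : G × S, M.act (gen a.1) a.2 = z)
    (hrel : ∀ j, M.act (gen (rel j).1.1) (rel j).1.2 = M.act (gen (rel j).2.1) (rel j).2.2)
    (huniv : ∀ r : G × S → G × S → Prop, Equivalence r →
      (∀ a b t, r a b → r (a.1, a.2 * t) (b.1, b.2 * t)) → (∀ j, r (rel j).1 (rel j).2) →
      ∀ a b, M.act (gen a.1) a.2 = M.act (gen b.1) b.2 → r a b) :
    FinPresented M := by
  obtain ⟨n, ⟨e⟩⟩ := Finite.exists_equiv_fin G
  obtain ⟨m, ⟨e'⟩⟩ := Finite.exists_equiv_fin R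
  let enc : G × S → (freeAct S n).carrier := fun a => (e a.1, a.2)
  let q : SMap (freeAct S n) M :=
    ⟨fun x => M.act (gen (e.symm x.1)) x.2, fun x s => (M.act_mul _ x.2 s).symm⟩
  have hq_enc : ∀ a, q.toFun (enc a) = M.act (gen a.1) a.2 := fun a => by
    simp [q, enc]
  refine ⟨n, q, fun z => ?_, m, fun j => (enc (rel (e'.symm j)).1, enc (rel (e'.symm j)).2),
    fun j => by simp only [hq_enc, hrel], fun r hr hp x y hxy => ?_⟩
  · obtain ⟨a, rfl⟩ := hgen z
    exact ⟨enc a, hq_enc a⟩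
  · have h := huniv (fun a b => r (enc a) (enc b))
      ⟨fun _ => hr.1.refl _, hr.1.symm, hr.1.trans⟩ (fun _ _ t h => hr.2 _ _ t h)
      (fun j => by simpa using hp (e' j)) (e.symm x.1, x.2) (e.symm y.1, y.2) hxy
    simp only [enc, Equiv.apply_symm_apply] at h
    exact h

/-- `T` is presented by the generators lying in `T`, subject to the relations among them. -/
theorem FinPresented.sub {M : SAct S} (hM : FinPresented M) {T : Set M.carrier}
    (hT : M.IsInvariant T) (hTc : M.IsInvariant Tᶜ) : FinPresented (M.sub T hT) := by
  obtain ⟨n, q, hq, m, p, hrel, huniv⟩ := hM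
  have hq_act : ∀ x : Fin n × S, q.toFun x = M.act (q.toFun (x.1, 1)) x.2 := fun x =>
    (congrArg q.toFun (Prod.ext rfl (one_mul x.2).symm : x = (x.1, 1 * x.2))).trans
      (q.map_act (x.1, 1) x.2)
  have mem_iff : ∀ x : Fin n × S, q.toFun x ∈ T ↔ q.toFun (x.1, 1) ∈ T := fun x => by
    rw [hq_act x]
    exact ⟨fun h => by_contra fun h' => hTc _ h' x.2 h, fun h => hT _ h x.2⟩
  refine finPresented_of_finite (G := {i : Fin n // q.toFun (i, 1) ∈ T})
    (R := {j : Fin m // q.toFun (p j).1 ∈ T}) (fun i => ⟨q.toFun (i.1, 1), i.2⟩)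
    (fun j => ((⟨(p j.1).1.1, (mem_iff _).1 j.2⟩, (p j.1).1.2),
      (⟨(p j.1).2.1, (mem_iff _).1 (hrel j.1 ▸ j.2)⟩, (p j.1).2.2))) ?_ ?_ ?_
  · rintro ⟨z, hz⟩
    obtain ⟨x, rfl⟩ := hq z
    exact ⟨(⟨x.1, (mem_iff x).1 hz⟩, x.2), Subtype.ext (hq_act x).symm⟩
  · intro j
    exact Subtype.ext ((hq_act _).symm.trans ((hrel j.1).trans (hq_act _)))
  · intro r hr hr_act hr_rel a b hab
    -- the congruence on the free act that restricts to `r` on the generators lying in `T`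
    let r' : (freeAct S n).carrier → (freeAct S n).carrier → Prop := fun x y =>
      q.toFun x = q.toFun y ∧ ∀ hx hy, r (⟨x.1, hx⟩, x.2) (⟨y.1, hy⟩, y.2)
    have mem_of_r' : ∀ {x y}, r' x y → q.toFun (x.1, 1) ∈ T → q.toFun (y.1, 1) ∈ T :=
      fun h hx => (mem_iff _).1 (h.1 ▸ (mem_iff _).2 hx)
    have hr' : IsCong (freeAct S n) r' :=
      ⟨⟨fun _ => ⟨rfl, fun _ _ => hr.refl _⟩,
        fun h => ⟨h.1.symm, fun hy hx => hr.symm (h.2 hx hy)⟩,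
        fun h₁ h₂ => ⟨h₁.1.trans h₂.1,
          fun hx hz => hr.trans (h₁.2 hx (mem_of_r' h₁ hx)) (h₂.2 _ hz)⟩⟩,
        fun _ _ t h =>
          ⟨by rw [q.map_act, q.map_act, h.1], fun hx hy => hr_act _ _ t (h.2 hx hy)⟩⟩
    have hab' : q.toFun (a.1.1, a.2) = q.toFun (b.1.1, b.2) :=
      (hq_act (a.1.1, a.2)).trans ((congrArg Subtype.val hab).trans (hq_act (b.1.1, b.2)).symm)
    exact (huniv r' hr' (fun j => ⟨hrel j, fun hx _ => hr_rel ⟨j, (mem_iff _).2 hx⟩⟩)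
      _ _ hab').2 a.1.2 b.1.2

/-- Unlike finitely presented acts, presentations form a set, so coproducts over all of them
make sense. -/
structure Presentation (S : Type u) [Monoid S] : Type u where
  gens : ℕ
  rels : ℕ
  rel : Fin rels → (freeAct S gens).carrier × (freeAct S gens).carrier

namespace Presentation

variable (d : Presentation S)

/-- Translates of the defining relations: their equivalence closure is the congruence
they generate. -/
def Step (a b : (freeAct S d.gens).carrier) : Prop :=
  ∃ (i : Fin d.rels) (s : S),
    a = (freeAct S d.gens).act (d.rel i).1 s ∧ b = (freeAct S d.gens).act (d.rel i).2 s

variable {d}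

theorem Step.act {a b : (freeAct S d.gens).carrier} (h : d.Step a b) (s : S) :
    d.Step ((freeAct S d.gens).act a s) ((freeAct S d.gens).act b s) := by
  obtain ⟨i, t, rfl, rfl⟩ := h
  exact ⟨i, t * s, (freeAct S d.gens).act_mul _ _ _, (freeAct S d.gens).act_mul _ _ _⟩

theorem step_rel (i : Fin d.rels) : d.Step (d.rel i).1 (d.rel i).2 :=
  ⟨i, 1, ((freeAct S d.gens).act_one _).symm, ((freeAct S d.gens).act_one _).symm⟩

variable (d)

def toAct : SAct S where
  carrier := Quot d.Step
  act x s := Quot.lift (fun a => Quot.mk _ ((freeAct S d.gens).act a s))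
    (fun _ _ h => Quot.sound (h.act s)) x
  act_one x := by
    induction x using Quot.ind with
    | _ a => exact congrArg (Quot.mk _) ((freeAct S d.gens).act_one a)
  act_mul x s t := by
    induction x using Quot.ind with
    | _ a => exact congrArg (Quot.mk _) ((freeAct S d.gens).act_mul a s t)

def quotMap : SMap (freeAct S d.gens) d.toAct := ⟨Quot.mk _, fun _ _ => rfl⟩

theorem finPresented_toAct : FinPresented d.toAct := by
  refine ⟨d.gens, d.quotMap, fun x => Quot.exists_rep x, d.rels, d.rel,
    fun i => Quot.sound (step_rel i), fun r hr hp x y hxy => ?_⟩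
  have h := Quot.eqvGen_exact hxy
  clear hxy
  induction h with
  | rel a b hab =>
    obtain ⟨i, s, rfl, rfl⟩ := hab
    exact hr.2 _ _ s (hp i)
  | refl a => exact hr.1.refl a
  | symm a b _ ih => exact hr.1.symm ih
  | trans a b c _ _ ih₁ ih₂ => exact hr.1.trans ih₁ ih₂

end Presentation

theorem FinPresented.exists_presentation_retract {M : SAct S} (hM : FinPresented M) :
    ∃ (d : Presentation S) (φ : SMap d.toAct M) (ψ : SMap M d.toAct), φ.comp ψ = SMap.id M := by
  obtain ⟨n, q, hq, m, p, hrel, huniv⟩ := hM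
  let d : Presentation S := ⟨n, m, p⟩
  have hsound : ∀ a b, d.Step a b → q.toFun a = q.toFun b := by
    rintro _ _ ⟨i, s, rfl, rfl⟩
    rw [q.map_act, q.map_act, hrel i]
  have hker : ∀ a b, q.toFun a = q.toFun b → d.quotMap.toFun a = d.quotMap.toFun b :=
    huniv _ ⟨⟨fun _ => rfl, Eq.symm, Eq.trans⟩,
      fun a b s (h : d.quotMap.toFun a = d.quotMap.toFun b) => by
        show d.quotMap.toFun _ = d.quotMap.toFun _
        rw [d.quotMap.map_act, d.quotMap.map_act, h]⟩
      fun i => Quot.sound (Presentation.step_rel (d := d) i)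
  refine ⟨d, ⟨Quot.lift q.toFun hsound, fun x s => ?_⟩,
    ⟨fun y => d.quotMap.toFun (hq y).choose, fun y s => hker _ _ ?_⟩, ?_⟩
  · induction x using Quot.ind with
    | _ a => exact q.map_act a s
  · rw [(hq _).choose_spec, q.map_act, (hq y).choose_spec]
  · ext y
    exact (hq y).choose_spec

def FPCoverIndex (Z : SAct S) : Type u := Σ d : Presentation S, SMap d.toAct Z

def fpCover (Z : SAct S) :
    SMap (SAct.sigmaCoprod fun i : FPCoverIndex Z => i.1.toAct) Z :=
  sigmaDesc fun i => i.2

theorem fpCover_isPureEpi (Z : SAct S) : IsPureEpi (fpCover Z) := by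
  refine isPureEpi_of_projWrt fun M hM w => ?_
  obtain ⟨d, φ, ψ, hφψ⟩ := hM.exists_presentation_retract
  refine ⟨(sigmaι _ ⟨d, w.comp φ⟩).comp ψ, ?_⟩
  ext m
  exact congrArg w.toFun (congrArg (fun k => k.toFun m) hφψ)

namespace RIFPClass

theorem of_retract {A B : SAct S} (hAB : ActRetract A B) (hB : RIFPClass S B) :
    RIFPClass S A := by
  obtain ⟨ι, F, hF, hB⟩ := hB
  exact ⟨ι, F, hF, hAB.trans hB⟩

theorem sigmaCoprod {ι : Type u} {F : ι → SAct S} (hF : ∀ i, FinPresented (F i)) :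
    RIFPClass S (SAct.sigmaCoprod F) :=
  ⟨ι, F, hF, ActRetract.refl _⟩

theorem of_finPresented {M : SAct S} (hM : FinPresented M) : RIFPClass S M :=
  of_retract ⟨sigmaι (fun _ : PUnit => M) PUnit.unit, sigmaDesc fun _ => SMap.id M, rfl⟩
    (sigmaCoprod fun _ => hM)

theorem projWrt {P C D : SAct S} (hP : RIFPClass S P) {g : SMap C D} (hg : IsPureEpi g) :
    ProjWrt P g := by
  obtain ⟨ι, F, hF, hPF⟩ := hP
  exact (projWrt_sigmaCoprod fun i => hg.2 _ (hF i)).of_retract hPF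

end RIFPClass

theorem uxClass_inl (X : SAct S) {E : SAct S} (hE : RIFPClass S E) :
    UXClass (RIFPClass S) (inl X E) :=
  ⟨(isUnitaryMono_inl X E).injective, (isUnitaryMono_inl X E).2,
    hE.of_retract (ActRetract.complInl X E)⟩

theorem copair_isPureEpi {X E Y : SAct S} (f : SMap X Y) {k : SMap E Y} (hk : IsPureEpi k) :
    IsPureEpi (copair f k) := by
  refine isPureEpi_of_projWrt fun M hM w => ?_
  obtain ⟨l, hl⟩ := hk.2 M hM w
  exact ⟨(inr X E).comp l, hl⟩

/-- The preimage of `im f` splits a finitely presented act into two finitely presented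
summands, which are lifted separately. -/
theorem IsUnitaryMono.copair_isPureEpi {X Y E : SAct S} {f : SMap X Y} (hf : IsUnitaryMono f)
    {k : SMap E (Y.sub (Set.range f.toFun)ᶜ hf.isInvariant_compl)} (hk : IsPureEpi k) :
    IsPureEpi (copair f ((subι _ _ _).comp k)) := by
  refine isPureEpi_of_projWrt fun M hM v => ?_
  have hP := (isInvariant_range f).preimage v
  have hPc := hf.isInvariant_compl.preimage v
  have hPcc : M.IsInvariant (v.toFun ⁻¹' Set.range f.toFun)ᶜᶜ := by
    rw [compl_compl]
    exact hP
  obtain ⟨l, hl⟩ := hk.2 _ (hM.sub hPc hPcc)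
    ((v.comp (subι _ _ hPc)).codRestrict _ hf.isInvariant_compl fun m => m.2)
  refine ⟨piecewise _ hP hPc ((inl X E).comp ((rangeInv f hf.injective).comp
    ((v.comp (subι _ _ hP)).codRestrict _ (isInvariant_range f) fun m => m.2)))
    ((inr X E).comp l), ?_⟩
  ext m
  by_cases hm : m ∈ v.toFun ⁻¹' Set.range f.toFun
  · rw [comp_toFun, piecewise_of_mem hm]
    exact rangeInv_toFun_apply f hf.injective _
  · rw [comp_toFun, piecewise_of_not_mem hm]
    exact congrArg Subtype.val (congrArg (fun k => k.toFun ⟨m, hm⟩) hl)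

theorem IsUnitaryMono.of_section {X Y E : SAct S} {f : SMap X Y} {k : SMap E Y}
    {h : SMap Y (X.coprod E)} (hhf : h.comp f = inl X E)
    (hh : (copair f k).comp h = SMap.id Y) : IsUnitaryMono f := by
  have hhf' : ∀ x, h.toFun (f.toFun x) = Sum.inl x := fun x => congrArg (fun l => l.toFun x) hhf
  refine ⟨fun a b hab => Sum.inl_injective ((hhf' a).symm.trans (hab ▸ hhf' b)), ?_⟩
  rintro y s ⟨x, hx⟩
  cases hy : h.toFun y with
  | inl x' => exact ⟨x', (congrArg (copair f k).toFun hy).symm.trans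
      (congrArg (fun l => l.toFun y) hh)⟩
  | inr e =>
    have := (hhf' x).symm.trans (hx ▸ h.map_act y s)
    rw [hy] at this
    exact (Sum.inl_ne_inr this).elim

theorem ActRetract.compl_of_section {X Y E : SAct S} {f : SMap X Y} (hf : IsUnitaryMono f)
    {k : SMap E (Y.sub (Set.range f.toFun)ᶜ hf.isInvariant_compl)} {h : SMap Y (X.coprod E)}
    (hh : (copair f ((subι _ _ _).comp k)).comp h = SMap.id Y) :
    ActRetract (Y.sub (Set.range f.toFun)ᶜ hf.isInvariant_compl) E := by
  have hh' : ∀ y, (copair f ((subι _ _ _).comp k)).toFun (h.toFun y) = y :=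
    fun y => congrArg (fun l => l.toFun y) hh
  have h_compl : ∀ t : (Y.sub (Set.range f.toFun)ᶜ hf.isInvariant_compl).carrier,
      h.toFun t.1 ∉ Set.range (inl X E).toFun := by
    rintro t ⟨x, hx⟩
    exact t.2 ⟨x, (congrArg (copair f _).toFun hx).trans (hh' t.1)⟩
  refine ⟨(complInlToRight X E).comp ((h.comp (subι _ _ _)).codRestrict _
    (isUnitaryMono_inl X E).isInvariant_compl h_compl), k, ?_⟩
  ext t
  exact Subtype.ext ((congrArg (copair f ((subι _ _ _).comp k)).toFun
    (inr_complInlToRight X E _)).trans (hh' t.1))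

theorem uxClass_of_llp {X Y : SAct S} {f : SMap X Y} (hf : llpC (PureEpiClass S) f) :
    UXClass (RIFPClass S) f := by
  have exists_section : ∀ {E : SAct S} (k : SMap E Y), IsPureEpi (copair f k) →
      ∃ h : SMap Y (X.coprod E), h.comp f = inl X E ∧ (copair f k).comp h = SMap.id Y :=
    fun k hk => hf _ hk (inl X _) (SMap.id Y) rfl
  obtain ⟨h₁, hh₁f, hh₁⟩ := exists_section _ (copair_isPureEpi f (fpCover_isPureEpi Y))
  have hu : IsUnitaryMono f := .of_section hh₁f hh₁
  obtain ⟨h₂, -, hh₂⟩ := exists_section _ (hu.copair_isPureEpi (fpCover_isPureEpi _))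
  exact ⟨hu.injective, hu.2, (RIFPClass.sigmaCoprod fun i => i.1.finPresented_toAct).of_retract
    (ActRetract.compl_of_section hu hh₂)⟩

theorem isPureEpi_of_rlp {C D : SAct S} {g : SMap C D}
    (hg : rlpC (UXClass (RIFPClass S)) g) : IsPureEpi g := by
  refine isPureEpi_of_projWrt fun M hM w => ?_
  obtain ⟨h, -, hh⟩ := hg _ (uxClass_inl C (.of_finPresented hM)) (SMap.id C) (copair g w) rfl
  exact ⟨h.comp (inr C M), congrArg (fun l => l.comp (inr C M)) hh⟩

theorem Lifts.of_uxClass {X Y C D : SAct S} {f : SMap X Y} (hf : UXClass (RIFPClass S) f)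
    {g : SMap C D} (hg : IsPureEpi g) : Lifts f g := by
  obtain ⟨hinj, hu, hT⟩ := hf
  exact IsUnitaryMono.lifts_of_projWrt ⟨hinj, hu⟩ (hT.projWrt hg)

theorem statement13 :
    IsWFS (UXClass (RIFPClass S)) (PureEpiClass S) := by
  refine ⟨fun _ => ⟨fun hg _ _ _ hf => .of_uxClass hf hg, isPureEpi_of_rlp⟩,
    fun _ => ⟨fun hf _ _ _ hg => .of_uxClass hf hg, uxClass_of_llp⟩, fun h => ?_⟩
  exact ⟨_, inl _ _, copair h (fpCover _),
    uxClass_inl _ (.sigmaCoprod fun i => i.1.finPresented_toAct),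
    copair_isPureEpi h (fpCover_isPureEpi _), rfl⟩
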